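/- arXiv:0708.3369 — 3 statements merged into one kernel-verified Lean document; each statement's English description precedes it below -/
import Mathlib

section
/- Let S = k[x_1,…,x_d] be a polynomial ring over a field k with homogeneous maximal ideal m = (x_1,…,x_d), and let I be an m-primary monomial ideal written in standard form I = (x_1^{a_1},…,x_d^{a_d}) + I^#, i.e. I^# is generated by monomials that together with x_1^{a_1},…,x_d^{a_d} minimally generate I. Suppose I^# = x_1^{b_1}⋯x_d^{b_d}·K, where K ≠ S is a monomial ideal and 0 ≤ b_i < a_i for each i. Then the ideal I' = (x_1^{a_1−b_1},…,x_d^{a_d−b_d}) + K is obtained from I by a double link via the regular sequences x_1^{a_1},…,x_d^{a_d} and x_1^{a_1−b_1},…,x_d^{a_d−b_d}; that is, setting J = (x_1^{a_1},…,x_d^{a_d}) : I, one has (x_1^{a_1},…,x_d^{a_d}) : J = I and (x_1^{a_1−b_1},…,x_d^{a_d−b_d}) : J = I'. -/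
open MvPolynomial

/-- An ideal of a polynomial ring is a monomial ideal if it is generated by monomials. -/
def IsMonomialIdeal {k : Type*} [Field k] {d : ℕ}
    (I : Ideal (MvPolynomial (Fin d) k)) : Prop :=
  ∃ T : Set (Fin d →₀ ℕ),
    I = Ideal.span ((fun s => (MvPolynomial.monomial s (1 : k))) '' T)

/-- A set `G` minimally generates the ideal `I`: it generates `I` and no element of `G`
lies in the ideal generated by the remaining elements. -/
def MinimallyGenerates {R : Type*} [CommRing R] (G : Set R) (I : Ideal R) : Prop :=
  Ideal.span G = I ∧ ∀ g ∈ G, g ∉ Ideal.span (G \ {g})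

section Aux

variable {k : Type*} [Field k] {d : ℕ}

/-- colon membership via a generating set -/
lemma mem_colon_span_iff (A : Ideal (MvPolynomial (Fin d) k))
    (G : Set (MvPolynomial (Fin d) k)) (r : MvPolynomial (Fin d) k) :
    r ∈ A.colon (Ideal.span G) ↔ ∀ g ∈ G, r * g ∈ A := by
  constructor
  · intro h g hg
    have := Submodule.mem_colon.mp h g (Ideal.subset_span hg)
    simpa [smul_eq_mul] using this
  · intro h
    refine Submodule.mem_colon.mpr fun p hp => ?_
    refine Submodule.span_induction ?_ ?_ ?_ ?_ hp
    · intro g hg; simpa [smul_eq_mul] using h g hg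
    · simp
    · intro x y _ _ hx hy; simpa [smul_eq_mul, mul_add] using A.add_mem hx hy
    · intro c x _ hx
      simpa [smul_eq_mul, mul_left_comm] using A.mul_mem_left c hx

lemma prod_X_pow_eq (b : Fin d → ℕ) :
    (∏ i, (X i : MvPolynomial (Fin d) k) ^ b i) =
      monomial (Finsupp.equivFunOnFinite.symm b) (1 : k) := by
  rw [← MvPolynomial.prod_X_pow_eq_monomial]
  refine (Finset.prod_subset (Finset.subset_univ _) ?_).symm
  intro i _ hi
  simp only [Finsupp.notMem_support_iff] at hi
  rw [show b i = 0 from hi, pow_zero]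

lemma range_X_pow_eq (a : Fin d → ℕ) :
    (Set.range fun i => (X i : MvPolynomial (Fin d) k) ^ a i) =
      (fun s => monomial s (1 : k)) '' (Set.range fun i => Finsupp.single i (a i)) := by
  rw [← Set.range_comp]
  refine congrArg _ (funext fun i => ?_)
  simp [Function.comp, X_pow_eq_monomial]

end Aux

/-- Lemma 2.1: let `I = (x₁^{a₁},…,x_d^{a_d}) + I#` be an `m`-primary monomial ideal in
standard form.  If `I# = x₁^{b₁}⋯x_d^{b_d}·K` with `K ≠ S` a monomial ideal and
`bᵢ < aᵢ` for all `i`, then the ideal `I' = (x₁^{a₁-b₁},…,x_d^{a_d-b_d}) + K` is obtained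
from `I` by a double link via the regular sequences `x₁^{a₁},…,x_d^{a_d}` and
`x₁^{a₁-b₁},…,x_d^{a_d-b_d}`: with `J = (x₁^{a₁},…,x_d^{a_d}) : I` one has
`(x₁^{a₁},…,x_d^{a_d}) : J = I` and `(x₁^{a₁-b₁},…,x_d^{a_d-b_d}) : J = I'`. -/
theorem monomial_double_link {k : Type*} [Field k] {d : ℕ} (a b : Fin d → ℕ)
    (I Ish K : Ideal (MvPolynomial (Fin d) k))
    (hprimary : I.radical = Ideal.span (Set.range (X : Fin d → MvPolynomial (Fin d) k)))
    (hmono : IsMonomialIdeal I)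
    (hstd : I = Ideal.span (Set.range fun i => (X i : MvPolynomial (Fin d) k) ^ a i) ⊔ Ish)
    (hmin : ∃ G : Set (MvPolynomial (Fin d) k),
      (∀ g ∈ G, ∃ s : Fin d →₀ ℕ, g = MvPolynomial.monomial s (1 : k)) ∧
      Ish = Ideal.span G ∧
      MinimallyGenerates
        ((Set.range fun i => (X i : MvPolynomial (Fin d) k) ^ a i) ∪ G) I)
    (hKmono : IsMonomialIdeal K) (hKtop : K ≠ ⊤)
    (hsharp : Ish = Ideal.span {∏ i, (X i : MvPolynomial (Fin d) k) ^ b i} * K)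
    (hb : ∀ i, b i < a i)
    (J : Ideal (MvPolynomial (Fin d) k))
    (hJ : J = (Ideal.span (Set.range fun i => (X i : MvPolynomial (Fin d) k) ^ a i)).colon I) :
    (Ideal.span (Set.range fun i => (X i : MvPolynomial (Fin d) k) ^ a i)).colon J = I ∧
    (Ideal.span (Set.range fun i => (X i : MvPolynomial (Fin d) k) ^ (a i - b i))).colon J =
      Ideal.span (Set.range fun i => (X i : MvPolynomial (Fin d) k) ^ (a i - b i)) ⊔ K := by
  classical
  obtain ⟨T, hT⟩ := hKmono
  set bF : Fin d →₀ ℕ := Finsupp.equivFunOnFinite.symm b with hbF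
  have hbFa : ∀ i, bF i = b i := fun i => rfl
  set SA : Set (Fin d →₀ ℕ) := Set.range fun i => Finsupp.single i (a i) with hSA
  set SB : Set (Fin d →₀ ℕ) := Set.range fun i => Finsupp.single i (a i - b i) with hSB
  set GI : Set (Fin d →₀ ℕ) := SA ∪ ((bF + ·) '' T) with hGI
  have hA : Ideal.span (Set.range fun i => (X i : MvPolynomial (Fin d) k) ^ a i) =
      Ideal.span ((fun s => monomial s (1 : k)) '' SA) := by
    rw [range_X_pow_eq]
  have hB : Ideal.span (Set.range fun i => (X i : MvPolynomial (Fin d) k) ^ (a i - b i)) =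
      Ideal.span ((fun s => monomial s (1 : k)) '' SB) := by
    rw [range_X_pow_eq]
  -- the monomial generating set of I
  have hI : I = Ideal.span ((fun s => monomial s (1 : k)) '' GI) := by
    rw [hstd, hsharp, hT, hA, prod_X_pow_eq, Ideal.span_mul_span', hGI, Set.image_union,
      Ideal.span_union, ← hbF]
    congr 2
    rw [Set.singleton_mul, Set.image_image, Set.image_image]
    refine congrArg₂ _ (funext fun t => ?_) rfl
    simp [monomial_mul]
  -- criterion for a monomial to lie in J
  have hvJ : ∀ v : Fin d →₀ ℕ,
      (∀ s ∈ GI, ∃ i, a i ≤ v i + s i) → monomial v (1 : k) ∈ J := by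
    intro v hv
    rw [hJ, hI, mem_colon_span_iff]
    rintro g ⟨s, hs, rfl⟩
    have hmm : monomial v (1 : k) * monomial s 1 = monomial (v + s) 1 := by
      rw [monomial_mul, one_mul]
    rw [hA, hmm, mem_ideal_span_monomial_image]
    intro w hw
    rw [support_monomial, if_neg one_ne_zero, Finset.mem_singleton] at hw
    subst hw
    obtain ⟨i, hi⟩ := hv s hs
    exact ⟨Finsupp.single i (a i), ⟨i, rfl⟩,
      Finsupp.single_le_iff.mpr (by simpa [Finsupp.add_apply] using hi)⟩
  constructor
  · -- Part 1 : A : J = I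
    apply le_antisymm
    · intro f hf
      by_contra hfI
      rw [hI, mem_ideal_span_monomial_image] at hfI
      push_neg at hfI
      obtain ⟨u, hu, hnot⟩ := hfI
      have h1 : ∀ i, u i < a i := by
        intro i
        by_contra h
        push_neg at h
        exact absurd (Finsupp.single_le_iff.mpr h) (hnot _ (Or.inl ⟨i, rfl⟩))
      have h2 : ∀ t ∈ T, ∃ i, u i < b i + t i := by
        intro t ht
        have h := hnot _ (Or.inr ⟨t, ht, rfl⟩)
        rw [Finsupp.le_def] at h
        push_neg at h
        obtain ⟨i, hi⟩ := h
        exact ⟨i, by simpa [Finsupp.add_apply, hbFa] using hi⟩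
      set v : Fin d →₀ ℕ := Finsupp.equivFunOnFinite.symm (fun i => a i - 1 - u i) with hv
      have hvi : ∀ i, v i = a i - 1 - u i := fun i => rfl
      have hvJ' : monomial v (1 : k) ∈ J := by
        apply hvJ
        rintro s (⟨i, rfl⟩ | ⟨t, ht, rfl⟩)
        · exact ⟨i, by rw [Finsupp.single_eq_same]; omega⟩
        · obtain ⟨i, hi⟩ := h2 t ht
          refine ⟨i, ?_⟩
          rw [Finsupp.add_apply, hbFa, hvi]
          have := h1 i
          omega
      have hfA := Submodule.mem_colon.mp hf _ hvJ'
      rw [smul_eq_mul, hA, mem_ideal_span_monomial_image] at hfA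
      have hmem : u + v ∈ (f * monomial v (1 : k)).support := by
        rw [mem_support_iff, coeff_mul_monomial, mul_one]
        exact mem_support_iff.mp hu
      obtain ⟨s, ⟨i, rfl⟩, hle⟩ := hfA _ hmem
      have hle' := Finsupp.single_le_iff.mp hle
      rw [Finsupp.add_apply, hvi] at hle'
      have := h1 i
      omega
    · intro r hr
      refine Submodule.mem_colon.mpr fun p hp => ?_
      rw [hJ] at hp
      have := Submodule.mem_colon.mp hp r hr
      simpa [smul_eq_mul, mul_comm] using this
  · -- Part 2 : B : J = B + K
    have hBK : Ideal.span (Set.range fun i => (X i : MvPolynomial (Fin d) k) ^ (a i - b i)) ⊔ K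
        = Ideal.span ((fun s => monomial s (1 : k)) '' (SB ∪ T)) := by
      rw [hB, hT, Set.image_union, Ideal.span_union]
    apply le_antisymm
    · intro f hf
      rw [hBK]
      by_contra hfQ
      rw [mem_ideal_span_monomial_image] at hfQ
      push_neg at hfQ
      obtain ⟨u, hu, hnot⟩ := hfQ
      have h1 : ∀ i, u i < a i - b i := by
        intro i
        by_contra h
        push_neg at h
        exact absurd (Finsupp.single_le_iff.mpr h) (hnot _ (Or.inl ⟨i, rfl⟩))
      have h2 : ∀ t ∈ T, ∃ i, u i < t i := by
        intro t ht
        have h := hnot _ (Or.inr ht)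
        rw [Finsupp.le_def] at h
        push_neg at h
        exact h
      set v : Fin d →₀ ℕ := Finsupp.equivFunOnFinite.symm (fun i => a i - b i - 1 - u i) with hv
      have hvi : ∀ i, v i = a i - b i - 1 - u i := fun i => rfl
      have hvJ' : monomial v (1 : k) ∈ J := by
        apply hvJ
        rintro s (⟨i, rfl⟩ | ⟨t, ht, rfl⟩)
        · exact ⟨i, by rw [Finsupp.single_eq_same]; omega⟩
        · obtain ⟨i, hi⟩ := h2 t ht
          refine ⟨i, ?_⟩
          rw [Finsupp.add_apply, hbFa, hvi]
          have := h1 i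
          have := hb i
          omega
      have hfB := Submodule.mem_colon.mp hf _ hvJ'
      rw [smul_eq_mul, hB, mem_ideal_span_monomial_image] at hfB
      have hmem : u + v ∈ (f * monomial v (1 : k)).support := by
        rw [mem_support_iff, coeff_mul_monomial, mul_one]
        exact mem_support_iff.mp hu
      obtain ⟨s, ⟨i, rfl⟩, hle⟩ := hfB _ hmem
      have hle' := Finsupp.single_le_iff.mp hle
      rw [Finsupp.add_apply, hvi] at hle'
      have := h1 i
      omega
    · refine sup_le ?_ ?_
      · intro r hr
        exact Submodule.mem_colon.mpr fun p hp => by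
          rw [smul_eq_mul]; exact Ideal.mul_mem_right p _ hr
      · intro r hr
        refine Submodule.mem_colon.mpr fun p hp => ?_
        rw [hJ] at hp
        have hbr : monomial bF (1 : k) * r ∈ I := by
          rw [hstd]
          refine Submodule.mem_sup_right ?_
          rw [hsharp, prod_X_pow_eq, ← hbF]
          exact Ideal.mul_mem_mul (Ideal.mem_span_singleton_self _) hr
        have hp' := Submodule.mem_colon.mp hp _ hbr
        rw [smul_eq_mul, hA, mem_ideal_span_monomial_image] at hp'
        rw [smul_eq_mul, hB, mem_ideal_span_monomial_image]
        intro u hu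
        have hmem : bF + u ∈ (monomial bF (1 : k) * (r * p)).support := by
          rw [mem_support_iff, coeff_monomial_mul, one_mul]
          exact mem_support_iff.mp hu
        have heq : monomial bF (1 : k) * (r * p) = p * (monomial bF 1 * r) := by ring
        rw [heq] at hmem
        obtain ⟨s, ⟨i, rfl⟩, hle⟩ := hp' _ hmem
        have hle' := Finsupp.single_le_iff.mp hle
        rw [Finsupp.add_apply, hbFa] at hle'
        exact ⟨Finsupp.single i (a i - b i), ⟨i, rfl⟩,
          Finsupp.single_le_iff.mpr (by omega)⟩
end

section
/- Let k be a field, S = k[x,y,z], and I = (z³, xyz, x³y, x⁴, y⁶, y⁵z, xy⁵). Set J = (x⁴, y⁶, z³) : I. Then (x⁴, y⁶, z³) : J = I and (x⁴, y⁵, z³) : J = (xz, x³, y⁴z, xy⁴, z³, y⁵); that is, I is doubly linked, via the monomial regular sequences x⁴, y⁶, z³ and x⁴, y⁵, z³, to the ideal I' = (xz, x³, y⁴z, xy⁴, z³, y⁵). -/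
/-!
Every ideal in sight is monomial, and the colon of two monomial ideals is again monomial: a
monomial `m` lies in `(A) : (T)` iff `m t ∈ (A)` for every generator `t`, i.e. iff its exponent
`d` satisfies `∀ e ∈ T, ∃ s ∈ A, s ≤ d + e`. Each of the three colon ideals is therefore
determined by a condition on `d ∈ ℕ³`, which is linear arithmetic in its three coordinates.
The first link gives `J = (z³, y⁵, xyz², x³z², x³y, x⁴)`.
-/

open MvPolynomial

namespace MvPolynomial

variable {σ R : Type*} [CommSemiring R] {A B T : Set (σ →₀ ℕ)}

theorem mul_monomial_mem_span_monomial_image {f : MvPolynomial σ R} {e : σ →₀ ℕ} :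
    f * monomial e 1 ∈ Ideal.span ((fun s => monomial s (1 : R)) '' A) ↔
      ∀ d ∈ f.support, ∃ s ∈ A, s ≤ d + e := by
  rw [mem_ideal_span_monomial_image]
  constructor
  · intro h d hd
    exact h (d + e) (by simpa [mem_support_iff, coeff_mul_monomial] using hd)
  · intro h d' hd'
    rw [mem_support_iff, coeff_mul_monomial'] at hd'
    split_ifs at hd' with he
    · simpa [tsub_add_cancel_of_le he] using h (d' - e) (by simpa [mem_support_iff] using hd')
    · exact absurd rfl hd'

theorem colon_span_monomial_image :
    (Ideal.span ((fun s => monomial s (1 : R)) '' A)).colon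
        (Ideal.span ((fun s => monomial s (1 : R)) '' T)) =
      Ideal.span ((fun s => monomial s (1 : R)) '' {d | ∀ e ∈ T, ∃ s ∈ A, s ≤ d + e}) := by
  ext f
  rw [Ideal.colon_span, Submodule.mem_colon, Set.forall_mem_image, mem_ideal_span_monomial_image]
  simp only [smul_eq_mul, mul_monomial_mem_span_monomial_image, Set.mem_ofPred_eq]
  constructor
  · exact fun h d hd => ⟨d, fun e he => h he d hd, le_rfl⟩
  · rintro h e he d hd
    obtain ⟨c, hc, hcd⟩ := h d hd
    obtain ⟨s, hs, hsc⟩ := hc e he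
    exact ⟨s, hs, hsc.trans (add_le_add_left hcd e)⟩

theorem span_monomial_image_le_span_monomial_image (h : ∀ a ∈ A, ∃ b ∈ B, b ≤ a) :
    Ideal.span ((fun s => monomial s (1 : R)) '' A) ≤
      Ideal.span ((fun s => monomial s (1 : R)) '' B) := by
  rw [Ideal.span_le, Set.image_subset_iff]
  intro a ha
  rw [Set.mem_preimage, SetLike.mem_coe, mem_ideal_span_monomial_image]
  intro d hd
  rw [Finset.mem_singleton.mp (support_monomial_subset hd)]
  exact h a ha

theorem colon_span_monomial_image_eq (h : ∀ d, (∀ e ∈ T, ∃ s ∈ A, s ≤ d + e) ↔ ∃ b ∈ B, b ≤ d) :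
    (Ideal.span ((fun s => monomial s (1 : R)) '' A)).colon
        (Ideal.span ((fun s => monomial s (1 : R)) '' T)) =
      Ideal.span ((fun s => monomial s (1 : R)) '' B) := by
  rw [colon_span_monomial_image]
  exact le_antisymm (span_monomial_image_le_span_monomial_image fun d hd => (h d).mp hd)
    (span_monomial_image_le_span_monomial_image fun b hb => ⟨b, (h b).mpr ⟨b, hb, le_rfl⟩, le_rfl⟩)

end MvPolynomial

noncomputable def multideg3 (a b c : ℕ) : Fin 3 →₀ ℕ :=
  Finsupp.single 0 a + Finsupp.single 1 b + Finsupp.single 2 c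

@[simp] theorem multideg3_apply_zero (a b c : ℕ) : multideg3 a b c 0 = a := by simp [multideg3]

@[simp] theorem multideg3_apply_one (a b c : ℕ) : multideg3 a b c 1 = b := by simp [multideg3]

@[simp] theorem multideg3_apply_two (a b c : ℕ) : multideg3 a b c 2 = c := by simp [multideg3]

theorem multideg3_le_iff {a b c : ℕ} {d : Fin 3 →₀ ℕ} :
    multideg3 a b c ≤ d ↔ a ≤ d 0 ∧ b ≤ d 1 ∧ c ≤ d 2 := by
  simp [Finsupp.le_def, Fin.forall_fin_succ]

theorem monomial_multideg3 {R : Type*} [CommSemiring R] (a b c : ℕ) :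
    monomial (multideg3 a b c) (1 : R) = X 0 ^ a * X 1 ^ b * X 2 ^ c := by
  simp [multideg3, X_pow_eq_monomial, monomial_mul]

/-- The ideal `I = (z³, xyz, x³y, x⁴, y⁶, y⁵z, xy⁵)` in `k[x,y,z]` is doubly linked, via
the monomial regular sequences `x⁴, y⁶, z³` and `x⁴, y⁵, z³`, to the ideal
`I' = (xz, x³, y⁴z, xy⁴, z³, y⁵)`: setting `J = (x⁴, y⁶, z³) : I`, one has
`(x⁴, y⁶, z³) : J = I` and `(x⁴, y⁵, z³) : J = I'`. -/
theorem double_link_of_monomial_example {k : Type*} [Field k]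
    (x y z : MvPolynomial (Fin 3) k) (hx : x = X 0) (hy : y = X 1) (hz : z = X 2)
    (I : Ideal (MvPolynomial (Fin 3) k))
    (hI : I = Ideal.span {z ^ 3, x * y * z, x ^ 3 * y, x ^ 4, y ^ 6, y ^ 5 * z, x * y ^ 5})
    (J : Ideal (MvPolynomial (Fin 3) k))
    (hJ : J = (Ideal.span {x ^ 4, y ^ 6, z ^ 3}).colon I) :
    (Ideal.span {x ^ 4, y ^ 6, z ^ 3}).colon J = I ∧
    (Ideal.span {x ^ 4, y ^ 5, z ^ 3}).colon J =
      Ideal.span {x * z, x ^ 3, y ^ 4 * z, x * y ^ 4, z ^ 3, y ^ 5} := by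
  subst hx hy hz hI hJ
  have hJ := colon_span_monomial_image_eq (R := k)
    (A := {multideg3 4 0 0, multideg3 0 6 0, multideg3 0 0 3})
    (T := {multideg3 0 0 3, multideg3 1 1 1, multideg3 3 1 0, multideg3 4 0 0, multideg3 0 6 0,
      multideg3 0 5 1, multideg3 1 5 0})
    (B := {multideg3 0 0 3, multideg3 0 5 0, multideg3 1 1 2, multideg3 3 0 2, multideg3 3 1 0,
      multideg3 4 0 0}) ?_
  have hI := colon_span_monomial_image_eq (R := k)
    (A := {multideg3 4 0 0, multideg3 0 6 0, multideg3 0 0 3})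
    (T := {multideg3 0 0 3, multideg3 0 5 0, multideg3 1 1 2, multideg3 3 0 2, multideg3 3 1 0,
      multideg3 4 0 0})
    (B := {multideg3 0 0 3, multideg3 1 1 1, multideg3 3 1 0, multideg3 4 0 0, multideg3 0 6 0,
      multideg3 0 5 1, multideg3 1 5 0}) ?_
  have hI' := colon_span_monomial_image_eq (R := k)
    (A := {multideg3 4 0 0, multideg3 0 5 0, multideg3 0 0 3})
    (T := {multideg3 0 0 3, multideg3 0 5 0, multideg3 1 1 2, multideg3 3 0 2, multideg3 3 1 0,
      multideg3 4 0 0})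
    (B := {multideg3 1 0 1, multideg3 3 0 0, multideg3 0 4 1, multideg3 1 4 0, multideg3 0 0 3,
      multideg3 0 5 0}) ?_
  · simp only [Set.image_insert_eq, Set.image_singleton, monomial_multideg3, pow_zero, pow_one,
      one_mul, mul_one] at hJ hI hI'
    rw [hJ]
    exact ⟨hI, hI'⟩
  all_goals
    intro d
    simp only [Set.mem_insert_iff, Set.mem_singleton_iff, forall_eq_or_imp, forall_eq,
      exists_eq_or_imp, exists_eq_left, multideg3_le_iff, Finsupp.add_apply, multideg3_apply_zero,
      multideg3_apply_one, multideg3_apply_two]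
    omega
end

section
/- Let k be an infinite field, S = k[x_0,…,x_d] with d ≥ 3, and adopt the setup of Theorem 3.2: integers 4 ≤ a_1 + 3 ≤ a_2 < a_3 < a_4 with a_1 ≠ 2 and a_2 + a_3 ≤ min{2, a_1} + a_4; F_1, F_4 homogeneous of degrees a_1, a_4 and L_1 a linear form with L_1, F_1, F_4 a regular sequence; I_1 = (L_1, F_1, F_4); F_2, F_3 ∈ I_1 homogeneous of degrees a_2, a_3 with F_2, F_3 and L_1, F_2 regular sequences; L_2 a linear form with L_2, F_2, F_3 a regular sequence; and I = L_2·I_1 + (F_2, F_3). Then for every homogeneous G ∈ I_1 such that G, F_2, F_3 is a regular sequence, one has (G, F_2, F_3) : I_1 = (G·L_2, F_2, F_3) : I. -/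
open MvPolynomial

/-- The height of an ideal: the infimum of the heights of the prime ideals containing it. -/
noncomputable def idealHeight {R : Type*} [CommRing R] (I : Ideal R) : ℕ∞ :=
  ⨅ P : {P : PrimeSpectrum R // I ≤ P.asIdeal}, Order.height P.1

/-- The ideal generated by the entries of a list. -/
def listSpan {R : Type*} [CommRing R] (rs : List R) : Ideal R :=
  Ideal.span {x | x ∈ rs}

/-- An ideal of a polynomial ring is homogeneous if it is generated by homogeneous
polynomials. -/
def IsHomogIdeal {k : Type*} [Field k] {m : ℕ} (I : Ideal (MvPolynomial (Fin m) k)) : Prop :=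
  ∃ G : Set (MvPolynomial (Fin m) k),
    I = Ideal.span G ∧ ∀ g ∈ G, ∃ e : ℕ, MvPolynomial.IsHomogeneous g e

/-- `rs` is a regular sequence of homogeneous forms whose degrees are given by `ds`. -/
def IsHomRegSeq {k : Type*} [Field k] {m : ℕ}
    (rs : List (MvPolynomial (Fin m) k)) (ds : List ℕ) : Prop :=
  List.Forall₂ (fun f d => MvPolynomial.IsHomogeneous f d) rs ds ∧
    RingTheory.Sequence.IsRegular (MvPolynomial (Fin m) k) rs

/-- `I` and `J` are directly homogeneously linked via an ideal generated by a regular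
sequence of `c` homogeneous forms contained in `I`. -/
def DirectHomLink {k : Type*} [Field k] {m : ℕ} (c : ℕ)
    (I J : Ideal (MvPolynomial (Fin m) k)) : Prop :=
  ∃ (rs : List (MvPolynomial (Fin m) k)) (ds : List ℕ),
    IsHomRegSeq rs ds ∧ rs.length = c ∧ (∀ f ∈ rs, f ∈ I) ∧
    J = (listSpan rs).colon I ∧ I = (listSpan rs).colon J

/-- `I` is generated by a regular sequence of `c` homogeneous forms
(a homogeneous complete intersection). -/
def IsHomCI {k : Type*} [Field k] {m : ℕ} (c : ℕ)
    (I : Ideal (MvPolynomial (Fin m) k)) : Prop :=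
  ∃ (rs : List (MvPolynomial (Fin m) k)) (ds : List ℕ),
    IsHomRegSeq rs ds ∧ rs.length = c ∧ listSpan rs = I

/-- `I` is homogeneously licci: a finite sequence of direct homogeneous links connects `I`
to a homogeneous complete intersection. -/
def HomogeneouslyLicci {k : Type*} [Field k] {m : ℕ} (c : ℕ)
    (I : Ideal (MvPolynomial (Fin m) k)) : Prop :=
  ∃ (n : ℕ) (Is : Fin (n + 1) → Ideal (MvPolynomial (Fin m) k)),
    Is 0 = I ∧ (∀ i : Fin n, DirectHomLink c (Is i.castSucc) (Is i.succ)) ∧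
    IsHomCI c (Is (Fin.last n))

/-- Sort a list of natural numbers non-decreasingly. -/
def sortLE (l : List ℕ) : List ℕ := l.insertionSort (· ≤ ·)

/-- `l` is lexicographically smaller than or equal to `l'`. -/
def lexLE (l l' : List ℕ) : Prop := List.Lex (· < ·) l l' ∨ l = l'

/-- `rs` is a regular sequence of `c` homogeneous forms contained in `I`, with degree list
`ds`, whose non-decreasingly ordered degree tuple is lexicographically least among those of
all regular sequences of `c` homogeneous forms contained in `I`. -/
def IsMinDegRegSeq {k : Type*} [Field k] {m : ℕ} (c : ℕ)
    (I : Ideal (MvPolynomial (Fin m) k)) (rs : List (MvPolynomial (Fin m) k))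
    (ds : List ℕ) : Prop :=
  IsHomRegSeq rs ds ∧ rs.length = c ∧ (∀ f ∈ rs, f ∈ I) ∧
  ∀ (rs' : List (MvPolynomial (Fin m) k)) (ds' : List ℕ),
    IsHomRegSeq rs' ds' → rs'.length = c → (∀ f ∈ rs', f ∈ I) →
    lexLE (sortLE ds) (sortLE ds')

/-- `I` is directly minimally homogeneously linked to `J`: the link is given by an ideal
generated by a regular sequence of homogeneous forms in `I` of minimal degrees. -/
def DirectMinHomLink {k : Type*} [Field k] {m : ℕ} (c : ℕ)
    (I J : Ideal (MvPolynomial (Fin m) k)) : Prop :=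
  ∃ (rs : List (MvPolynomial (Fin m) k)) (ds : List ℕ),
    IsMinDegRegSeq c I rs ds ∧
    J = (listSpan rs).colon I ∧ I = (listSpan rs).colon J

/-- `I` is minimally homogeneously licci: a finite sequence of direct minimal homogeneous
links connects `I` to a homogeneous complete intersection. -/
def MinimallyHomogeneouslyLicci {k : Type*} [Field k] {m : ℕ} (c : ℕ)
    (I : Ideal (MvPolynomial (Fin m) k)) : Prop :=
  ∃ (n : ℕ) (Is : Fin (n + 1) → Ideal (MvPolynomial (Fin m) k)),
    Is 0 = I ∧ (∀ i : Fin n, DirectMinHomLink c (Is i.castSucc) (Is i.succ)) ∧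
    IsHomCI c (Is (Fin.last n))

open RingTheory.Sequence

private lemma quot_reg' {R : Type*} [CommRing R] {J' J : Ideal R} {r : R}
    (h : IsSMulRegular (R ⧸ (J' • ⊤ : Submodule R R)) r) (hJ' : J' = J)
    {b : R} (hb : r * b ∈ J) : b ∈ J := by
  subst hJ'
  have hJ : (J' • ⊤ : Submodule R R) = J' := by rw [smul_eq_mul, Ideal.mul_top]
  have h0 : r • (Submodule.Quotient.mk b : R ⧸ (J' • ⊤ : Submodule R R)) = r • (0 : _) := by
    rw [smul_zero, ← Submodule.Quotient.mk_smul, Submodule.Quotient.mk_eq_zero, hJ]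
    exact hb
  have h1 := h h0
  rw [show (0 : R ⧸ (J' • ⊤ : Submodule R R)) = Submodule.Quotient.mk 0 from rfl,
    Submodule.Quotient.eq] at h1
  rw [hJ] at h1
  simpa using h1

private lemma swap_nzd' {R : Type*} [CommRing R] {J : Ideal R} {x y : R}
    (hx : ∀ b, x * b ∈ J → b ∈ J)
    (hy : ∀ b, y * b ∈ J ⊔ Ideal.span {x} → b ∈ J ⊔ Ideal.span {x}) :
    ∀ a, x * a ∈ J ⊔ Ideal.span {y} → a ∈ J ⊔ Ideal.span {y} := by
  intro a ha
  obtain ⟨j, hj, z, hz, hza⟩ := Submodule.mem_sup.mp ha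
  obtain ⟨c, rfl⟩ := Ideal.mem_span_singleton'.mp hz
  have hc : c ∈ J ⊔ Ideal.span {x} := hy c (by
    refine Submodule.mem_sup.mpr ⟨-j, neg_mem hj, x*a,
      Ideal.mem_span_singleton'.mpr ⟨a, by ring⟩, ?_⟩
    linear_combination -hza)
  obtain ⟨j', hj', w, hw, hwc⟩ := Submodule.mem_sup.mp hc
  obtain ⟨e, rfl⟩ := Ideal.mem_span_singleton'.mp hw
  have key : x * (a - e*y) ∈ J := by
    have heq : x * (a - e*y) = j + j' * y := by linear_combination -hza - y * hwc
    rw [heq]; exact add_mem hj (Ideal.mul_mem_right _ _ hj')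
  exact Submodule.mem_sup.mpr ⟨a - e*y, hx _ key, e*y,
    Ideal.mem_span_singleton'.mpr ⟨e, rfl⟩, by ring⟩

/-- The double-link identity in the proof of Theorem 3.2: for every homogeneous `G ∈ I₁`
such that `G, F₂, F₃` is a regular sequence, `(G, F₂, F₃) : I₁ = (G·L₂, F₂, F₃) : I`. -/
theorem basic_double_link_colon_identity {k : Type*} [Field k] [Infinite k] {d : ℕ} (hd : 3 ≤ d)
    (a1 a2 a3 a4 : ℕ)
    (ha1 : 4 ≤ a1 + 3) (ha12 : a1 + 3 ≤ a2) (ha23 : a2 < a3) (ha34 : a3 < a4)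
    (ha1ne : a1 ≠ 2) (hsum : a2 + a3 ≤ min 2 a1 + a4)
    (F1 F4 L1 : MvPolynomial (Fin (d + 1)) k)
    (hF1 : MvPolynomial.IsHomogeneous F1 a1) (hF4 : MvPolynomial.IsHomogeneous F4 a4)
    (hL1 : MvPolynomial.IsHomogeneous L1 1)
    (hreg1 : RingTheory.Sequence.IsRegular (MvPolynomial (Fin (d + 1)) k) [L1, F1, F4])
    (I1 : Ideal (MvPolynomial (Fin (d + 1)) k)) (hI1 : I1 = Ideal.span {L1, F1, F4})
    (F2 F3 : MvPolynomial (Fin (d + 1)) k) (hF2I : F2 ∈ I1) (hF3I : F3 ∈ I1)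
    (hF2 : MvPolynomial.IsHomogeneous F2 a2) (hF3 : MvPolynomial.IsHomogeneous F3 a3)
    (hreg23 : RingTheory.Sequence.IsRegular (MvPolynomial (Fin (d + 1)) k) [F2, F3])
    (hregL1F2 : RingTheory.Sequence.IsRegular (MvPolynomial (Fin (d + 1)) k) [L1, F2])
    (L2 : MvPolynomial (Fin (d + 1)) k) (hL2 : MvPolynomial.IsHomogeneous L2 1)
    (hreg2 : RingTheory.Sequence.IsRegular (MvPolynomial (Fin (d + 1)) k) [L2, F2, F3])
    (I : Ideal (MvPolynomial (Fin (d + 1)) k))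
    (hI : I = Ideal.span {L2} * I1 ⊔ Ideal.span {F2, F3}) :
    ∀ (G : MvPolynomial (Fin (d + 1)) k) (dG : ℕ),
      MvPolynomial.IsHomogeneous G dG → G ∈ I1 →
      RingTheory.Sequence.IsRegular (MvPolynomial (Fin (d + 1)) k) [G, F2, F3] →
      (Ideal.span {G, F2, F3}).colon I1 = (Ideal.span {G * L2, F2, F3}).colon I := by
  intro G dG hG hGI1 hregG
  -- non-zerodivisor facts
  have hx0 : IsSMulRegular (MvPolynomial (Fin (d + 1)) k) L2 :=
    ((isRegular_cons_iff _ _ _).mp hreg2).1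
  have hF2mod : ∀ b, F2 * b ∈ Ideal.span {L2} → b ∈ Ideal.span {L2} := fun b hb =>
    quot_reg' (hreg2.toIsWeaklyRegular.regular_mod_prev 1 (by norm_num))
      (by simp [Ideal.ofList_singleton]) hb
  have hF3mod : ∀ b, F3 * b ∈ Ideal.span {L2, F2} → b ∈ Ideal.span {L2, F2} := fun b hb =>
    quot_reg' (hreg2.toIsWeaklyRegular.regular_mod_prev 2 (by norm_num))
      (by simp [Ideal.ofList_singleton, Ideal.span_insert]) hb
  have hbotx : ∀ b, L2 * b ∈ (⊥ : Ideal (MvPolynomial (Fin (d + 1)) k)) → b ∈ (⊥ : Ideal (MvPolynomial (Fin (d + 1)) k)) := by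
    intro b hb
    rw [Ideal.mem_bot] at hb ⊢
    exact hx0 (show L2 • b = L2 • 0 by simpa [smul_eq_mul] using hb)
  have hboty : ∀ b, F2 * b ∈ (⊥ : Ideal (MvPolynomial (Fin (d + 1)) k)) ⊔ Ideal.span {L2} →
      b ∈ (⊥ : Ideal (MvPolynomial (Fin (d + 1)) k)) ⊔ Ideal.span {L2} := by
    simpa only [bot_sup_eq] using hF2mod
  have hL2F2 : ∀ b, L2 * b ∈ Ideal.span {F2} → b ∈ Ideal.span {F2} := by
    have h := swap_nzd' hbotx hboty
    simpa only [bot_sup_eq] using h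
  have hL2F23 : ∀ b, L2 * b ∈ Ideal.span {F2, F3} → b ∈ Ideal.span {F2, F3} := by
    have hy' : ∀ b, F3 * b ∈ Ideal.span {F2} ⊔ Ideal.span {L2} →
        b ∈ Ideal.span {F2} ⊔ Ideal.span {L2} := by
      intro b hb
      have hsp : Ideal.span ({F2} : Set _) ⊔ Ideal.span {L2} = Ideal.span {L2, F2} := by
        rw [Ideal.span_insert, sup_comm]
      rw [hsp] at hb ⊢
      exact hF3mod b hb
    have h := swap_nzd' hL2F2 hy'
    intro b hb
    have hsp : Ideal.span ({F2, F3} : Set (MvPolynomial (Fin (d + 1)) k))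
        = Ideal.span {F2} ⊔ Ideal.span {F3} := by rw [Ideal.span_insert]
    rw [hsp] at hb ⊢
    exact h b hb
  -- notation
  set J := Ideal.span ({G, F2, F3} : Set (MvPolynomial (Fin (d + 1)) k)) with hJdef
  set J' := Ideal.span ({G * L2, F2, F3} : Set (MvPolynomial (Fin (d + 1)) k)) with hJ'def
  have hGJ : G ∈ J := Ideal.subset_span (by simp)
  have hF2J : F2 ∈ J := Ideal.subset_span (by simp)
  have hF3J : F3 ∈ J := Ideal.subset_span (by simp)
  have hGLJ' : G * L2 ∈ J' := Ideal.subset_span (by simp)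
  have hF2J' : F2 ∈ J' := Ideal.subset_span (by simp)
  have hF3J' : F3 ∈ J' := Ideal.subset_span (by simp)
  have hLJ : ∀ z ∈ J, L2 * z ∈ J' := by
    intro z hz
    induction hz using Submodule.span_induction with
    | mem x hx =>
      rcases hx with rfl | rfl | rfl
      · rw [mul_comm]; exact hGLJ'
      · exact Ideal.mul_mem_left _ _ hF2J'
      · exact Ideal.mul_mem_left _ _ hF3J'
    | zero => simpa using J'.zero_mem
    | add x y hx hy ihx ihy => rw [mul_add]; exact add_mem ihx ihy
    | smul a x hx ihx =>
      rw [smul_eq_mul, show L2 * (a * x) = a * (L2 * x) by ring]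
      exact Ideal.mul_mem_left _ _ ihx
  ext r
  rw [Submodule.mem_colon, Submodule.mem_colon]
  constructor
  · intro hr p hp
    rw [hI] at hp
    obtain ⟨q, hq, s, hs, rfl⟩ := Submodule.mem_sup.mp hp
    rw [smul_eq_mul, mul_add]
    refine add_mem ?_ ?_
    · refine Submodule.mul_induction_on hq ?_ ?_
      · intro m hm n hn
        obtain ⟨c, rfl⟩ := Ideal.mem_span_singleton'.mp hm
        have hrn : r * n ∈ J := by simpa [smul_eq_mul] using hr n hn
        rw [show r * (c * L2 * n) = c * (L2 * (r * n)) by ring]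
        exact Ideal.mul_mem_left _ _ (hLJ _ hrn)
      · intro x y hx hy
        rw [mul_add]; exact add_mem hx hy
    · have hsJ' : s ∈ J' := by
        refine Ideal.span_mono ?_ hs
        intro t ht; rcases ht with rfl | rfl <;> simp
      exact Ideal.mul_mem_left _ _ hsJ'
  · intro hr p hp
    have h1 : L2 * p ∈ I := by
      rw [hI]
      exact le_sup_left (α := Ideal (MvPolynomial (Fin (d + 1)) k))
        (Submodule.mul_mem_mul (Ideal.mem_span_singleton_self L2) hp)
    have h2 : r * (L2 * p) ∈ J' := by simpa [smul_eq_mul] using hr _ h1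
    rw [hJ'def, show ({G * L2, F2, F3} : Set (MvPolynomial (Fin (d + 1)) k))
      = insert (G * L2) {F2, F3} from rfl, Ideal.mem_span_insert] at h2
    obtain ⟨c, w, hw, heq⟩ := h2
    have h3 : L2 * (r * p - c * G) ∈ Ideal.span ({F2, F3} : Set (MvPolynomial (Fin (d + 1)) k)) := by
      have : L2 * (r * p - c * G) = w := by linear_combination heq
      rw [this]; exact hw
    have h4 := hL2F23 _ h3
    have h5 : r * p - c * G ∈ J := by
      refine Ideal.span_mono ?_ h4
      intro t ht; rcases ht with rfl | rfl <;> simp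
    have h6 : c * G ∈ J := Ideal.mul_mem_left _ _ hGJ
    have := add_mem h5 h6
    simpa [smul_eq_mul] using this
end
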